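/- If two AMA menus M1 and M2, both indexed by {0,1,...,K}, are ε-reducible, then they are ε-mode-connected; moreover, the continuous path connecting them can be taken piecewise linear with only five linear pieces. -/

import Mathlib

open MeasureTheory Finset

namespace AMA

/-- An AMA menu: for each of the `K+1` option indices, an allocation
`x : Fin m → Fin n → ℝ` (buyer `i` receives `x i j` of item `j`) and a boost `β : ℝ`. -/
abbrev Menu (m n K : ℕ) := Fin (K + 1) → (Fin m → Fin n → ℝ) × ℝ

/-- Inner product of a valuation and an allocation. -/
def dotp {n : ℕ} (v x : Fin n → ℝ) : ℝ := ∑ j, v j * x j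

/-- A valid AMA menu: entries in `[0,1]`, each item allocated at most once in total,
default option `(0, 0)`. -/
def IsMenu {m n K : ℕ} (M : Menu m n K) : Prop :=
  (∀ k i j, 0 ≤ (M k).1 i j ∧ (M k).1 i j ≤ 1) ∧
  (∀ k j, ∑ i, (M k).1 i j ≤ 1) ∧ M 0 = 0

/-- The set of valuation profiles: each buyer's valuation lies in `[0,1]^n` with
coordinate sum at most `1`. -/
def VP (m n : ℕ) : Set (Fin m → Fin n → ℝ) :=
  {v | ∀ i, (∀ j, 0 ≤ v i j ∧ v i j ≤ 1) ∧ ∑ j, v i j ≤ 1}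

/-- Boosted welfare of option `k` at the valuation profile `v`. -/
def bw {m n K : ℕ} (M : Menu m n K) (v : Fin m → Fin n → ℝ) (k : Fin (K + 1)) : ℝ :=
  (∑ i, dotp (v i) ((M k).1 i)) + (M k).2

/-- Boosted welfare of option `k` at `v` when buyer `i` is omitted. -/
def bwWo {m n K : ℕ} (M : Menu m n K) (v : Fin m → Fin n → ℝ) (i : Fin m)
    (k : Fin (K + 1)) : ℝ :=
  (∑ l ∈ Finset.univ.erase i, dotp (v l) ((M k).1 l)) + (M k).2

/-- Maximal boosted welfare `W(v)`. -/
noncomputable def W {m n K : ℕ} (M : Menu m n K) (v : Fin m → Fin n → ℝ) : ℝ :=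
  Finset.univ.sup' Finset.univ_nonempty (bw M v)

/-- Maximal boosted welfare `W(v₋ᵢ)` with buyer `i` omitted. -/
noncomputable def WWo {m n K : ℕ} (M : Menu m n K) (v : Fin m → Fin n → ℝ)
    (i : Fin m) : ℝ :=
  Finset.univ.sup' Finset.univ_nonempty (bwWo M v i)

/-- The minimal boost among boosted-welfare-maximizing options (tie-breaking in favor
of maximal total payment). -/
noncomputable def minBeta {m n K : ℕ} (M : Menu m n K) (v : Fin m → Fin n → ℝ) : ℝ :=
  sInf {b : ℝ | ∃ k, bw M v k = W M v ∧ b = (M k).2}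

/-- Total payment collected at `v`:
`∑ i W(v₋ᵢ) − (m−1) W(v) − min {β k : W_k(v) = W(v)}`. -/
noncomputable def pay {m n K : ℕ} (M : Menu m n K) (v : Fin m → Fin n → ℝ) : ℝ :=
  (∑ i, WWo M v i) - ((m : ℝ) - 1) * W M v - minBeta M v

/-- Expected revenue of the AMA menu `M` under the profile distribution `F`. -/
noncomputable def Rev {m n K : ℕ} (F : Measure (Fin m → Fin n → ℝ))
    (M : Menu m n K) : ℝ :=
  ∫ v, pay M v ∂F

/-- Option-wise convex combination of two AMA menus. -/
noncomputable def comb {m n K : ℕ} (lam : ℝ) (M M' : Menu m n K) : Menu m n K :=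
  fun k => (fun i j => lam * (M k).1 i j + (1 - lam) * (M' k).1 i j,
            lam * (M k).2 + (1 - lam) * (M' k).2)

/-- The event that the option subset `K'` suffices at `v`: some boosted-welfare
maximizer with minimal boost lies in `K'`, and for every buyer `i` some maximizer of the
boosted welfare of `v₋ᵢ` lies in `K'`. -/
def GoodEvent {m n K : ℕ} (M : Menu m n K) (K' : Finset (Fin (K + 1)))
    (v : Fin m → Fin n → ℝ) : Prop :=
  (∃ k ∈ K', bw M v k = W M v ∧ (M k).2 = minBeta M v) ∧
  ∀ i : Fin m, ∃ k ∈ K', bwWo M v i k = WWo M v i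

/-- `M` is `ε`-reducible: some subset `K'` of options containing the default option, of
cardinality at most `√(K+1)`, whose good event has probability at least `1 - ε/m`. -/
def Reducible {m n K : ℕ} (F : Measure (Fin m → Fin n → ℝ)) (M : Menu m n K)
    (ε : ℝ) : Prop :=
  ∃ K' : Finset (Fin (K + 1)), 0 ∈ K' ∧ (K'.card : ℝ) ≤ Real.sqrt (K + 1) ∧
    (F {v | GoodEvent M K' v}).toReal ≥ 1 - ε / (m : ℝ)

/-- `M₁` and `M₂` are `ε`-mode-connected by a piecewise linear path with `pieces`
linear pieces, all whose menus are valid AMA menus and have revenue at least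
`min (Rev M₁) (Rev M₂) - ε`. -/
def PLConnected {m n K : ℕ} (F : Measure (Fin m → Fin n → ℝ)) (M₁ M₂ : Menu m n K)
    (ε : ℝ) (pieces : ℕ) : Prop :=
  ∃ P : Fin (pieces + 1) → Menu m n K, P 0 = M₁ ∧ P (Fin.last pieces) = M₂ ∧
    (∀ i, IsMenu (P i)) ∧
    ∀ i : Fin pieces, ∀ lam ∈ Set.Icc (0 : ℝ) 1,
      Rev F (comb lam (P i.castSucc) (P i.succ)) ≥ min (Rev F M₁) (Rev F M₂) - ε

/-! Let `K₁`, `K₂` be the option sets witnessing the reducibility of `M₁`, `M₂`. Since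
`|K₁| |K₂| ≤ K + 1`, the indices can be relabelled by a map `r` onto `K₁ × K₂` that fixes `K₁`
in its first and `K₂` in its second coordinate. The menus `D₁ = M₁ ∘ fst ∘ r` and
`D₂ = M₂ ∘ snd ∘ r` offer each pair `(M₁ k₁, M₂ k₂)` with `kᵢ ∈ Kᵢ` at a common index, so along
the segment from `D₁` to `D₂` the welfare maxima, the tie-breaking boost and hence the revenue
interpolate linearly. Along the segment from `M₁` to `D₁` the options in `K₁` stay put and all
others are convex combinations of options of `M₁`, so the payment can only grow wherever `K₁`
suffices; this fails with probability at most `ε / m`, and payments lie in `[0, m]`. The same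
holds from `D₂` to `M₂`. The path `M₁, D₁, D₂, M₂`, padded by two constant pieces, has five
linear pieces. -/

lemma exists_reindex_onto_product {α : Type*} [Fintype α] [DecidableEq α]
    {s₁ s₂ : Finset α} {a : α} (h₁ : a ∈ s₁) (h₂ : a ∈ s₂)
    (hcard : #s₁ * #s₂ ≤ Fintype.card α) :
    ∃ r : α → α × α, (∀ k ∈ s₁, (r k).1 = k) ∧ (∀ k ∈ s₂, (r k).2 = k) ∧
      Set.range r = (s₁ : Set α) ×ˢ (s₂ : Set α) := by
  set U := s₁ ∪ s₂
  -- the pair forced at `k ∈ U`, with `a` in a coordinate left free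
  set e : α → α × α := fun k => (if k ∈ s₁ then k else a, if k ∈ s₂ then k else a)
  have he_inv : Set.LeftInvOn (fun p : α × α => if p.1 = a then p.2 else p.1) e U := by
    intro k hk
    rw [coe_union, Set.mem_union] at hk
    by_cases hk₁ : k ∈ s₁ <;> by_cases hka : k = a <;> simp_all [e]
  have he_maps : Set.MapsTo e U ↑(s₁ ×ˢ s₂) := by
    intro k _
    simp only [e, coe_product, Set.mem_prod, mem_coe]
    constructor <;> split_ifs <;> assumption
  -- extend `e` to a bijection from some `T ⊇ U` onto `s₁ ×ˢ s₂`
  obtain ⟨T, hUT, -, hT⟩ := exists_subsuperset_card_eq (subset_univ U) (n := #(s₁ ×ˢ s₂))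
    (card_le_card_of_injOn e he_maps he_inv.injOn) (by simpa [card_product] using hcard)
  obtain ⟨g, hg⟩ := Set.MapsTo.exists_equiv_extend_of_card_eq (s := {k : T | (k : α) ∈ U})
    (t := s₁ ×ˢ s₂) (f := e ∘ Subtype.val) (by simpa using hT) (fun _ hk => he_maps hk)
    (he_inv.injOn.comp Subtype.val_injective.injOn fun k hk => hk)
  have hr : ∀ k ∈ U, (if hk : k ∈ T then (g ⟨k, hk⟩ : α × α) else (a, a)) = e k := fun k hk => by
    rw [dif_pos (hUT hk)]; exact hg ⟨k, hUT hk⟩ hk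
  refine ⟨fun k => if hk : k ∈ T then g ⟨k, hk⟩ else (a, a), fun k hk => ?_, fun k hk => ?_, ?_⟩
  · simp [hr k (mem_union_left _ hk), e, hk]
  · simp [hr k (mem_union_right _ hk), e, hk]
  · rw [← coe_product]
    apply Set.Subset.antisymm
    · rintro _ ⟨k, rfl⟩
      dsimp only
      split_ifs
      · exact (g _).2
      · simp [h₁, h₂]
    · intro p hp
      obtain ⟨k, hk⟩ := g.surjective ⟨p, hp⟩
      exact ⟨k, by simp [hk]⟩

lemma mul_le_of_cast_le_sqrt {a b N : ℕ} (ha : (a : ℝ) ≤ √N) (hb : (b : ℝ) ≤ √N) :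
    a * b ≤ N := by
  have := mul_le_mul ha hb (Nat.cast_nonneg _) (Real.sqrt_nonneg _)
  rw [Real.mul_self_sqrt (Nat.cast_nonneg _)] at this
  exact_mod_cast this

lemma convex_comb_le {a b c lam : ℝ} (ha : a ≤ c) (hb : b ≤ c) (h₀ : 0 ≤ lam) (h₁ : lam ≤ 1) :
    lam * a + (1 - lam) * b ≤ c := by
  nlinarith

lemma le_convex_comb {a b c lam : ℝ} (ha : c ≤ a) (hb : c ≤ b) (h₀ : 0 ≤ lam) (h₁ : lam ≤ 1) :
    c ≤ lam * a + (1 - lam) * b := by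
  nlinarith

lemma sup'_convex_comb_of_rectangular {ι : Type*} [Fintype ι] [Nonempty ι] {f g : ι → ℝ}
    (hfg : ∀ a b, ∃ s, f s = f a ∧ g s = g b) {t : ℝ} (h₀ : 0 ≤ t) (h₁ : t ≤ 1) :
    univ.sup' univ_nonempty (fun s => t * f s + (1 - t) * g s) =
      t * univ.sup' univ_nonempty f + (1 - t) * univ.sup' univ_nonempty g := by
  obtain ⟨a, -, ha⟩ := exists_mem_eq_sup' univ_nonempty f
  obtain ⟨b, -, hb⟩ := exists_mem_eq_sup' univ_nonempty g
  obtain ⟨s, hsa, hsb⟩ := hfg a b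
  refine le_antisymm (sup'_le _ _ fun k _ => ?_) ?_
  · exact add_le_add (mul_le_mul_of_nonneg_left (le_sup' f (mem_univ k)) h₀)
      (mul_le_mul_of_nonneg_left (le_sup' g (mem_univ k)) (by linarith))
  · rw [ha, hb, ← hsa, ← hsb]
    exact le_sup' (fun s => t * f s + (1 - t) * g s) (mem_univ s)

variable {m n K : ℕ}

section Welfare

variable (M : Menu m n K) (v : Fin m → Fin n → ℝ)

lemma bw_le_W (k) : bw M v k ≤ W M v := le_sup' _ (mem_univ k)

lemma bwWo_le_WWo (i k) : bwWo M v i k ≤ WWo M v i := le_sup' _ (mem_univ k)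

lemma exists_bw_eq_W : ∃ k, bw M v k = W M v := by
  obtain ⟨k, -, hk⟩ := exists_mem_eq_sup' univ_nonempty (bw M v)
  exact ⟨k, hk.symm⟩

lemma exists_bwWo_eq_WWo (i) : ∃ k, bwWo M v i k = WWo M v i := by
  obtain ⟨k, -, hk⟩ := exists_mem_eq_sup' univ_nonempty (bwWo M v i)
  exact ⟨k, hk.symm⟩

lemma bwWo_eq_bw_sub (i k) : bwWo M v i k = bw M v k - dotp (v i) ((M k).1 i) := by
  rw [bwWo, bw, ← sum_erase_add _ _ (mem_univ i)]
  ring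

private lemma finite_betas :
    {b : ℝ | ∃ k, bw M v k = W M v ∧ b = (M k).2}.Finite :=
  (Set.finite_range fun k => (M k).2).subset fun _ ⟨k, _, hb⟩ => ⟨k, hb.symm⟩

private lemma nonempty_betas : {b : ℝ | ∃ k, bw M v k = W M v ∧ b = (M k).2}.Nonempty :=
  let ⟨k, hk⟩ := exists_bw_eq_W M v
  ⟨(M k).2, k, hk, rfl⟩

variable {M v}

lemma minBeta_le {k} (hk : bw M v k = W M v) : minBeta M v ≤ (M k).2 :=
  csInf_le (finite_betas M v).bddBelow ⟨k, hk, rfl⟩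

lemma le_minBeta {c : ℝ} (h : ∀ k, bw M v k = W M v → c ≤ (M k).2) : c ≤ minBeta M v :=
  le_csInf (nonempty_betas M v) fun _ ⟨k, hk, hb⟩ => hb ▸ h k hk

variable (M v)

lemma exists_minBeta : ∃ k, bw M v k = W M v ∧ (M k).2 = minBeta M v :=
  let ⟨k, hk, hb⟩ := (nonempty_betas M v).csInf_mem (finite_betas M v)
  ⟨k, hk, hb.symm⟩

end Welfare

section Payment

variable {M : Menu m n K} {v : Fin m → Fin n → ℝ}

/-- The VCG form of the payment: the externality each buyer imposes on the others, measured
at a boost-minimal welfare maximizer. -/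
lemma pay_eq_sum_sub {k} (hk : bw M v k = W M v) (hb : (M k).2 = minBeta M v) :
    pay M v = ∑ i, (WWo M v i - bwWo M v i k) := by
  simp only [sum_sub_distrib, bwWo_eq_bw_sub, sum_const, card_univ, Fintype.card_fin,
    nsmul_eq_mul, hk, pay]
  rw [← hk]
  simp only [bw, hb]
  ring

lemma pay_nonneg : 0 ≤ pay M v := by
  obtain ⟨k, hk, hb⟩ := exists_minBeta M v
  rw [pay_eq_sum_sub hk hb]
  exact sum_nonneg fun i _ => sub_nonneg.mpr (bwWo_le_WWo M v i k)

lemma pay_le (hM : IsMenu M) (hv : v ∈ VP m n) : pay M v ≤ m := by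
  obtain ⟨k, hk, hb⟩ := exists_minBeta M v
  rw [pay_eq_sum_sub hk hb]
  have hdotp : ∀ i k, 0 ≤ dotp (v i) ((M k).1 i) ∧ dotp (v i) ((M k).1 i) ≤ 1 := fun i k =>
    ⟨sum_nonneg fun j _ => mul_nonneg ((hv i).1 j).1 (hM.1 k i j).1,
      (sum_le_sum fun j _ => mul_le_of_le_one_right ((hv i).1 j).1 (hM.1 k i j).2).trans (hv i).2⟩
  calc ∑ i, (WWo M v i - bwWo M v i k) ≤ ∑ _i : Fin m, (1 : ℝ) := by
        refine sum_le_sum fun i _ => ?_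
        obtain ⟨k', hk'⟩ := exists_bwWo_eq_WWo M v i
        rw [← hk', bwWo_eq_bw_sub, bwWo_eq_bw_sub, hk]
        linarith [bw_le_W M v k', hdotp i k', hdotp i k]
    _ = m := by simp

/-- The welfare maxima of `N` and `M` coincide, and the tie-breaking boost of `N` is no
larger. -/
lemma pay_le_pay {N : Menu m n K} (hbw : ∀ k, bw N v k ≤ W M v)
    (hbwWo : ∀ i k, bwWo N v i k ≤ WWo M v i)
    (hN : ∃ k, bw N v k = W M v ∧ (N k).2 = minBeta M v)
    (hNWo : ∀ i, ∃ k, bwWo N v i k = WWo M v i) : pay M v ≤ pay N v := by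
  obtain ⟨k, hk, hb⟩ := hN
  have hW : W N v = W M v := le_antisymm (sup'_le _ _ fun k _ => hbw k) (hk ▸ bw_le_W N v k)
  have hWWo : ∀ i, WWo N v i = WWo M v i := fun i =>
    let ⟨k', hk'⟩ := hNWo i
    le_antisymm (sup'_le _ _ fun k _ => hbwWo i k) (hk' ▸ bwWo_le_WWo N v i k')
  have hmin : minBeta N v ≤ minBeta M v := hb ▸ minBeta_le (hk.trans hW.symm)
  simp only [pay, hW, hWWo]
  linarith

end Payment

section Combination

variable (lam : ℝ) (M M' : Menu m n K)

lemma comb_eq : comb lam M M' = lam • M + (1 - lam) • M' := rfl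

lemma comb_zero : comb 0 M M' = M' := by simp [comb_eq]

lemma comb_one : comb 1 M M' = M := by simp [comb_eq]

lemma comb_self : comb lam M M = M := by rw [comb_eq]; module

lemma comb_comm : comb lam M M' = comb (1 - lam) M' M := by simp only [comb_eq]; module

lemma dotp_comb (a b : ℝ) (w x y : Fin n → ℝ) :
    dotp w (fun j => a * x j + b * y j) = a * dotp w x + b * dotp w y := by
  simp only [dotp, mul_sum, ← sum_add_distrib]
  exact sum_congr rfl fun j _ => by ring

lemma bw_comb (v k) : bw (comb lam M M') v k = lam * bw M v k + (1 - lam) * bw M' v k := by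
  simp only [bw, comb, dotp_comb, sum_add_distrib, ← mul_sum]
  ring

lemma bwWo_comb (v i k) :
    bwWo (comb lam M M') v i k = lam * bwWo M v i k + (1 - lam) * bwWo M' v i k := by
  simp only [bwWo, comb, dotp_comb, sum_add_distrib, ← mul_sum]
  ring

variable {lam M M'}

lemma IsMenu.comb (h₀ : 0 ≤ lam) (h₁ : lam ≤ 1) (hM : IsMenu M) (hM' : IsMenu M') :
    IsMenu (comb lam M M') := by
  refine ⟨fun k i j => ?_, fun k j => ?_, ?_⟩
  · obtain ⟨a₀, a₁⟩ := hM.1 k i j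
    obtain ⟨b₀, b₁⟩ := hM'.1 k i j
    simp only [AMA.comb]
    constructor <;> nlinarith
  · have := hM.2.1 k j
    have := hM'.2.1 k j
    simp only [AMA.comb, sum_add_distrib, ← mul_sum]
    nlinarith
  · simp [comb_eq, hM.2.2, hM'.2.2]

lemma IsMenu.reindex (hM : IsMenu M) {ρ : Fin (K + 1) → Fin (K + 1)} (hρ : ρ 0 = 0) :
    IsMenu fun k => M (ρ k) :=
  ⟨fun k => hM.1 (ρ k), fun k => hM.2.1 (ρ k), by simp only [hρ, hM.2.2]⟩

end Combination

lemma pay_le_pay_comb_reindex {M : Menu m n K} {K' : Finset (Fin (K + 1))}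
    {ρ : Fin (K + 1) → Fin (K + 1)} (hρ : ∀ k ∈ K', ρ k = k) {v : Fin m → Fin n → ℝ}
    (hv : GoodEvent M K' v) {lam : ℝ} (h₀ : 0 ≤ lam) (h₁ : lam ≤ 1) :
    pay M v ≤ pay (comb lam M fun k => M (ρ k)) v := by
  set N := comb lam M fun k => M (ρ k)
  have hN : ∀ k ∈ K', N k = M k := fun k hk => by
    have := congrFun (comb_self lam M) k
    simp only [N, comb, hρ k hk] at this ⊢
    exact this
  obtain ⟨⟨k, hk, hkW, hkb⟩, hWo⟩ := hv
  refine pay_le_pay (fun s => ?_) (fun i s => ?_) ⟨k, ?_, ?_⟩ fun i => ?_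
  · rw [bw_comb]
    exact convex_comb_le (bw_le_W M v s) (bw_le_W M v (ρ s)) h₀ h₁
  · rw [bwWo_comb]
    exact convex_comb_le (bwWo_le_WWo M v i s) (bwWo_le_WWo M v i (ρ s)) h₀ h₁
  · simp only [bw, hN k hk] at hkW ⊢
    exact hkW
  · rw [hN k hk, hkb]
  · obtain ⟨k', hk', hk'W⟩ := hWo i
    refine ⟨k', ?_⟩
    simp only [bwWo, hN k' hk'] at hk'W ⊢
    exact hk'W

/-- Two menus on the same index set whose pairs of options `(D₁ s, D₂ s)` form a product
set. -/
def IsRectangular (D₁ D₂ : Menu m n K) : Prop :=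
  ∀ a b, ∃ s, D₁ s = D₁ a ∧ D₂ s = D₂ b

lemma isRectangular_of_range_eq_prod {r : Fin (K + 1) → Fin (K + 1) × Fin (K + 1)}
    {A B : Set (Fin (K + 1))} (hr : Set.range r = A ×ˢ B) (M₁ M₂ : Menu m n K) :
    IsRectangular (fun k => M₁ (r k).1) (fun k => M₂ (r k).2) := fun a b => by
  have ha : r a ∈ A ×ˢ B := hr ▸ Set.mem_range_self a
  have hb : r b ∈ A ×ˢ B := hr ▸ Set.mem_range_self b
  obtain ⟨s, hs⟩ : ((r a).1, (r b).2) ∈ Set.range r := hr ▸ ⟨ha.1, hb.2⟩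
  exact ⟨s, by simp only [hs], by simp only [hs]⟩

section Rectangular

variable {D₁ D₂ : Menu m n K} (hD : IsRectangular D₁ D₂) (v : Fin m → Fin n → ℝ)
  {t : ℝ} (h₀ : 0 ≤ t) (h₁ : t ≤ 1)
include hD h₀ h₁

lemma W_comb_of_rectangular : W (comb t D₁ D₂) v = t * W D₁ v + (1 - t) * W D₂ v := by
  simp only [W, bw_comb]
  refine sup'_convex_comb_of_rectangular (fun a b => ?_) h₀ h₁
  obtain ⟨s, hsa, hsb⟩ := hD a b
  exact ⟨s, by simp only [bw, hsa], by simp only [bw, hsb]⟩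

lemma WWo_comb_of_rectangular (i) :
    WWo (comb t D₁ D₂) v i = t * WWo D₁ v i + (1 - t) * WWo D₂ v i := by
  simp only [WWo, bwWo_comb]
  refine sup'_convex_comb_of_rectangular (fun a b => ?_) h₀ h₁
  obtain ⟨s, hsa, hsb⟩ := hD a b
  exact ⟨s, by simp only [bwWo, hsa], by simp only [bwWo, hsb]⟩

omit h₀ h₁ in
lemma minBeta_comb_of_rectangular (h₀ : 0 < t) (h₁ : t < 1) :
    minBeta (comb t D₁ D₂) v = t * minBeta D₁ v + (1 - t) * minBeta D₂ v := by
  have hW := W_comb_of_rectangular hD v h₀.le h₁.le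
  refine le_antisymm ?_ (le_minBeta fun s hs => ?_)
  · obtain ⟨a, ha, hab⟩ := exists_minBeta D₁ v
    obtain ⟨b, hb, hbb⟩ := exists_minBeta D₂ v
    obtain ⟨s, hsa, hsb⟩ := hD a b
    have hs : bw (comb t D₁ D₂) v s = W (comb t D₁ D₂) v := by
      rw [bw_comb, hW, ← ha, ← hb]
      simp only [bw, hsa, hsb]
    calc minBeta (comb t D₁ D₂) v ≤ (comb t D₁ D₂ s).2 := minBeta_le hs
      _ = _ := by simp only [comb, hsa, hsb, hab, hbb]
  · rw [bw_comb, hW] at hs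
    have ha := bw_le_W D₁ v s
    have hb := bw_le_W D₂ v s
    have ha' : bw D₁ v s = W D₁ v := by nlinarith
    have hb' : bw D₂ v s = W D₂ v := by nlinarith
    have := minBeta_le ha'
    have := minBeta_le hb'
    simp only [comb]
    nlinarith

lemma pay_comb_of_rectangular :
    pay (comb t D₁ D₂) v = t * pay D₁ v + (1 - t) * pay D₂ v := by
  rcases h₀.eq_or_lt with rfl | h₀'
  · rw [comb_zero]; ring
  rcases h₁.eq_or_lt with rfl | h₁'
  · rw [comb_one]; ring
  simp only [pay, W_comb_of_rectangular hD v h₀ h₁, WWo_comb_of_rectangular hD v h₀ h₁,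
    minBeta_comb_of_rectangular hD v h₀' h₁', sum_add_distrib, ← mul_sum]
  ring

end Rectangular

section Measurability

variable (M : Menu m n K)

lemma measurable_bw (k) : Measurable fun v : Fin m → Fin n → ℝ => bw M v k := by
  unfold bw dotp
  fun_prop

lemma measurable_bwWo (i k) : Measurable fun v : Fin m → Fin n → ℝ => bwWo M v i k := by
  unfold bwWo dotp
  fun_prop

lemma measurable_W : Measurable fun v : Fin m → Fin n → ℝ => W M v := by
  convert Finset.measurable_sup' univ_nonempty fun k _ => measurable_bw M k with v
  rw [Finset.sup'_apply]
  rfl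

lemma measurable_WWo (i) : Measurable fun v : Fin m → Fin n → ℝ => WWo M v i := by
  convert Finset.measurable_sup' univ_nonempty fun k _ => measurable_bwWo M i k with v
  rw [Finset.sup'_apply]
  rfl

/-- The tie-breaking boost as a finite minimum; non-maximizing options are given the largest
boost of the menu, which never undercuts the boost of a maximizer. -/
lemma minBeta_eq_inf' (v : Fin m → Fin n → ℝ) :
    minBeta M v = univ.inf' univ_nonempty fun k =>
      if bw M v k = W M v then (M k).2 else univ.sup' univ_nonempty fun k' => (M k').2 := by
  obtain ⟨k, hk, hb⟩ := exists_minBeta M v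
  refine le_antisymm ?_ ?_
  · refine le_inf' _ _ fun k' _ => ?_
    split_ifs with hk'
    · exact minBeta_le hk'
    · exact hb ▸ le_sup' (fun k' => (M k').2) (mem_univ k)
  · refine (inf'_le _ (mem_univ k)).trans ?_
    rw [if_pos hk, hb]

lemma measurable_minBeta : Measurable fun v : Fin m → Fin n → ℝ => minBeta M v := by
  have hterm : ∀ k ∈ univ, Measurable fun v => if bw M v k = W M v then (M k).2
      else univ.sup' univ_nonempty fun k' => (M k').2 := fun k _ =>
    Measurable.ite (measurableSet_eq_fun (measurable_bw M k) (measurable_W M))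
      measurable_const measurable_const
  convert inf'_induction univ_nonempty _ (p := Measurable)
    (fun _ hf _ hg => Measurable.inf hf hg) hterm with v
  rw [minBeta_eq_inf', Finset.inf'_apply]

lemma measurable_pay : Measurable fun v : Fin m → Fin n → ℝ => pay M v := by
  unfold pay
  exact ((Finset.measurable_sum _ fun i _ => measurable_WWo M i).sub
    ((measurable_W M).const_mul _)).sub (measurable_minBeta M)

end Measurability

lemma isClosed_VP : IsClosed (VP m n) := by
  simp only [VP, Set.ofPred_forall, Set.ofPred_and]
  exact isClosed_iInter fun i => (isClosed_iInter fun j =>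
    (isClosed_le continuous_const (by fun_prop)).inter
      (isClosed_le (by fun_prop) continuous_const)).inter
    (isClosed_le (by fun_prop) continuous_const)

section Revenue

variable {F : Measure (Fin m → Fin n → ℝ)} [IsProbabilityMeasure F] (hFV : F (VP m n) = 1)
include hFV

lemma ae_mem_VP : ∀ᵐ v ∂F, v ∈ VP m n :=
  ae_iff.2 ((prob_compl_eq_zero_iff isClosed_VP.measurableSet).2 hFV)

lemma integrable_pay {M : Menu m n K} (hM : IsMenu M) : Integrable (fun v => pay M v) F := by
  refine .of_bound (measurable_pay M).aestronglyMeasurable m ?_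
  filter_upwards [ae_mem_VP hFV] with v hv
  rw [Real.norm_of_nonneg pay_nonneg]
  exact pay_le hM hv

lemma rev_sub_le_rev (hm : 0 < m) {M N : Menu m n K} (hM : IsMenu M) (hN : IsMenu N)
    {G : Set (Fin m → Fin n → ℝ)} {ε : ℝ} (hG : (F G).toReal ≥ 1 - ε / m)
    (hMN : ∀ v ∈ VP m n, v ∈ G → pay M v ≤ pay N v) : Rev F M - ε ≤ Rev F N := by
  set H := {v | pay M v ≤ pay N v}
  have hH : MeasurableSet H := measurableSet_le (measurable_pay M) (measurable_pay N)
  have hGH : F.real G ≤ F.real H := calc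
    F.real G ≤ F.real (H ∪ (VP m n)ᶜ) := measureReal_mono fun v hv => by
      by_cases hvV : v ∈ VP m n
      exacts [Or.inl (hMN v hvV hv), Or.inr hvV]
    _ ≤ F.real H + F.real (VP m n)ᶜ := measureReal_union_le _ _
    _ = F.real H := by
      rw [(measureReal_eq_zero_iff (μ := F)).2
        ((prob_compl_eq_zero_iff isClosed_VP.measurableSet).2 hFV), add_zero]
  have hHc : F.real Hᶜ * m ≤ ε := by
    rw [probReal_compl_eq_one_sub hH, ← le_div_iff₀ (by exact_mod_cast hm)]
    exact (sub_le_comm.1 hG).trans' (sub_le_sub_left hGH 1)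
  have hpt : ∀ᵐ v ∂F, pay M v ≤ pay N v + Hᶜ.indicator (fun _ => (m : ℝ)) v := by
    filter_upwards [ae_mem_VP hFV] with v hv
    by_cases hvH : v ∈ H
    · rw [Set.indicator_of_notMem (Set.notMem_compl_iff.2 hvH), add_zero]
      exact hvH
    · rw [Set.indicator_of_mem hvH]
      linarith [pay_le hM hv, pay_nonneg (M := N) (v := v)]
  have := integral_mono_ae (integrable_pay hFV hM)
    ((integrable_pay hFV hN).add ((integrable_const _).indicator hH.compl)) hpt
  simp only [Pi.add_apply] at this
  rw [integral_add (integrable_pay hFV hN) ((integrable_const _).indicator hH.compl),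
    integral_indicator_const _ hH.compl, smul_eq_mul] at this
  unfold Rev
  linarith

lemma rev_sub_le_rev_comb_reindex (hm : 0 < m) {M : Menu m n K} (hM : IsMenu M)
    {K' : Finset (Fin (K + 1))} {ρ : Fin (K + 1) → Fin (K + 1)} (hρ : ∀ k ∈ K', ρ k = k)
    (hMρ : IsMenu fun k => M (ρ k)) {ε : ℝ}
    (hK' : (F {v | GoodEvent M K' v}).toReal ≥ 1 - ε / m) {lam : ℝ} (hlam : lam ∈ Set.Icc 0 1) :
    Rev F M - ε ≤ Rev F (comb lam M fun k => M (ρ k)) :=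
  rev_sub_le_rev hFV hm hM (hM.comb hlam.1 hlam.2 hMρ) hK' fun _ _ hv =>
    pay_le_pay_comb_reindex hρ hv hlam.1 hlam.2

lemma rev_comb_of_rectangular {D₁ D₂ : Menu m n K} (hD₁ : IsMenu D₁) (hD₂ : IsMenu D₂)
    (hD : IsRectangular D₁ D₂) {t : ℝ} (h₀ : 0 ≤ t) (h₁ : t ≤ 1) :
    Rev F (comb t D₁ D₂) = t * Rev F D₁ + (1 - t) * Rev F D₂ := by
  simp only [Rev, pay_comb_of_rectangular hD _ h₀ h₁]
  rw [integral_add ((integrable_pay hFV hD₁).const_mul t)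
    ((integrable_pay hFV hD₂).const_mul (1 - t)), integral_const_mul, integral_const_mul]

end Revenue

lemma Reducible.nonneg {F : Measure (Fin m → Fin n → ℝ)} [IsProbabilityMeasure F]
    (hm : 0 < m) {M : Menu m n K} {ε : ℝ} (h : Reducible F M ε) : 0 ≤ ε := by
  obtain ⟨K', -, -, hK'⟩ := h
  have : (F {v | GoodEvent M K' v}).toReal ≤ 1 := measureReal_le_one
  have : 0 ≤ ε / m := by linarith
  simpa [div_mul_cancel₀, hm.ne'] using mul_nonneg this (Nat.cast_nonneg m)

lemma plConnected_of_segments {F : Measure (Fin m → Fin n → ℝ)} {ε : ℝ} (hε : 0 ≤ ε)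
    {M₁ D₁ D₂ M₂ : Menu m n K} (hM₁ : IsMenu M₁) (hD₁ : IsMenu D₁) (hD₂ : IsMenu D₂)
    (hM₂ : IsMenu M₂)
    (h₁ : ∀ lam ∈ Set.Icc (0 : ℝ) 1, Rev F M₁ - ε ≤ Rev F (comb lam M₁ D₁))
    (h₂ : ∀ lam ∈ Set.Icc (0 : ℝ) 1, min (Rev F D₁) (Rev F D₂) ≤ Rev F (comb lam D₁ D₂))
    (h₃ : ∀ lam ∈ Set.Icc (0 : ℝ) 1, Rev F M₂ - ε ≤ Rev F (comb lam D₂ M₂)) :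
    PLConnected F M₁ M₂ ε 5 := by
  have hD₁ε : Rev F M₁ - ε ≤ Rev F D₁ := by
    simpa only [comb_zero] using h₁ 0 ⟨le_rfl, zero_le_one⟩
  have hD₂ε : Rev F M₂ - ε ≤ Rev F D₂ := by
    simpa only [comb_one] using h₃ 1 ⟨zero_le_one, le_rfl⟩
  have := min_le_left (Rev F M₁) (Rev F M₂)
  have := min_le_right (Rev F M₁) (Rev F M₂)
  refine ⟨![M₁, D₁, D₂, M₂, M₂, M₂], rfl, rfl, fun i => ?_, fun i lam hlam => ?_⟩
  · fin_cases i <;> assumption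
  fin_cases i
  · show Rev F (comb lam M₁ D₁) ≥ _
    linarith [h₁ lam hlam]
  · show Rev F (comb lam D₁ D₂) ≥ _
    linarith [h₂ lam hlam, min_le_min hD₁ε hD₂ε, min_sub_sub_right (Rev F M₁) (Rev F M₂) ε]
  · show Rev F (comb lam D₂ M₂) ≥ _
    linarith [h₃ lam hlam]
  all_goals
    show Rev F (comb lam M₂ M₂) ≥ _
    rw [comb_self]
    linarith

/-- If two AMA menus `M₁`, `M₂` (indexed by `{0,…,K}`) are
`ε`-reducible, then they are `ε`-mode-connected via a piecewise linear path with five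
linear pieces. -/
theorem statement14 {m n K : ℕ} (hm : 0 < m) (F : Measure (Fin m → Fin n → ℝ))
    [IsProbabilityMeasure F] (hFV : F (VP m n) = 1) (ε : ℝ)
    (M₁ M₂ : Menu m n K) (hM₁ : IsMenu M₁) (hM₂ : IsMenu M₂)
    (hr₁ : Reducible F M₁ ε) (hr₂ : Reducible F M₂ ε) :
    PLConnected F M₁ M₂ ε 5 := by
  have hε := hr₁.nonneg hm
  obtain ⟨s₁, h0₁, hc₁, hG₁⟩ := hr₁
  obtain ⟨s₂, h0₂, hc₂, hG₂⟩ := hr₂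
  have hcard : #s₁ * #s₂ ≤ K + 1 :=
    mul_le_of_cast_le_sqrt (by exact_mod_cast hc₁) (by exact_mod_cast hc₂)
  obtain ⟨r, hr₁, hr₂, hr⟩ := exists_reindex_onto_product h0₁ h0₂ (by simpa using hcard)
  have hD₁ : IsMenu fun k => M₁ (r k).1 := hM₁.reindex (hr₁ 0 h0₁)
  have hD₂ : IsMenu fun k => M₂ (r k).2 := hM₂.reindex (hr₂ 0 h0₂)
  refine plConnected_of_segments hε hM₁ hD₁ hD₂ hM₂
    (fun lam hlam => rev_sub_le_rev_comb_reindex hFV hm hM₁ hr₁ hD₁ hG₁ hlam)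
    (fun lam hlam => ?_) (fun lam hlam => ?_)
  · rw [rev_comb_of_rectangular hFV hD₁ hD₂ (isRectangular_of_range_eq_prod hr M₁ M₂)
      hlam.1 hlam.2]
    exact le_convex_comb (min_le_left _ _) (min_le_right _ _) hlam.1 hlam.2
  · rw [comb_comm]
    exact rev_sub_le_rev_comb_reindex hFV hm hM₂ hr₂ hD₂ hG₂
      ⟨sub_nonneg.2 hlam.2, sub_le_self _ hlam.1⟩

end AMA
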